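/- Let ℬ be a doubling ball-basis. Then for any balls A ⊂ B in ℬ there exists a finite chain of balls A = A₀ ⊂ A₁ ⊂ … ⊂ Aₙ = [B] such that μ(A_{k+1}) ≤ C μ(A_k) for all k, where C depends only on the constants 𝒦 and η of the ball-basis. -/

import Mathlib

open MeasureTheory Set ENNReal NNReal

/-- A ball-basis on a measure space `(X, μ)`: a family of measurable sets of positive
finite measure satisfying conditions B1)-B4) of Karagulyan. -/
structure BallBasis (X : Type*) [MeasurableSpace X] (μ : Measure X) where
  balls : Set (Set X)
  K : ℝ≥0
  K_pos : 0 < K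
  measurableSet : ∀ B ∈ balls, MeasurableSet B
  measure_pos : ∀ B ∈ balls, 0 < μ B
  measure_lt_top : ∀ B ∈ balls, μ B < ∞
  exists_ball : ∀ x y : X, ∃ B ∈ balls, x ∈ B ∧ y ∈ B
  approx : ∀ E : Set X, MeasurableSet E → ∀ ε : ℝ≥0∞, 0 < ε →
      ∃ Bs : ℕ → Set X, (∀ k, Bs k ∈ balls) ∧ μ (symmDiff E (⋃ k, Bs k)) < ε
  hull : Set X → Set X
  hull_mem : ∀ B ∈ balls, hull B ∈ balls
  star_subset_hull : ∀ B ∈ balls,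
      (⋃₀ {A | A ∈ balls ∧ μ A ≤ 2 * μ B ∧ (A ∩ B).Nonempty}) ⊆ hull B
  measure_hull_le : ∀ B ∈ balls, μ (hull B) ≤ (K : ℝ≥0∞) * μ B

namespace BallBasis

variable {X : Type*} [MeasurableSpace X] {μ : Measure X}

/-- `B* = ⋃ {A ∈ ℬ : μ A ≤ 2 μ B, A ∩ B ≠ ∅}`. -/
def star (ℬ : BallBasis X μ) (B : Set X) : Set X :=
  ⋃₀ {A | A ∈ ℬ.balls ∧ μ A ≤ 2 * μ B ∧ (A ∩ B).Nonempty}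

/-- The doubling condition for a ball-basis, with doubling constant `η`. -/
def Doubling (ℬ : BallBasis X μ) (η : ℝ≥0) : Prop :=
  ∀ B ∈ ℬ.balls, ℬ.star B ≠ univ →
    ∃ B' ∈ ℬ.balls, B ⊂ B' ∧ μ B' ≤ (η : ℝ≥0∞) * μ B

end BallBasis

/-
A strict enlargement of a ball need not increase its measure, so one cannot simply keep applying
the doubling condition; a supremum argument replaces the iteration.  Among the balls reachable
from `A` by steps of bounded measure ratio and with at most half the measure of `B` ("small"),
pick `P₀` of measure above half the supremum.  All small reachable balls meet `P₀` (they contain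
`A`) and are at most twice as large, so `[P₀]` contains all of them.  Either `[P₀]` is not
small, or it is the largest small reachable ball and the doubling condition applied to it
produces a reachable ball that is not small.  In each case some reachable ball is comparable
with `B`, and one last step leads to `[B]`.
-/

theorem Relation.ReflTransGen.exists_seq {α : Type*} {r : α → α → Prop} {a b : α}
    (h : Relation.ReflTransGen r a b) :
    ∃ (n : ℕ) (f : ℕ → α), f 0 = a ∧ f n = b ∧ ∀ k < n, r (f k) (f (k + 1)) := by
  induction h using Relation.ReflTransGen.head_induction_on with
  | refl => exact ⟨0, fun _ => b, rfl, rfl, fun _ hk => absurd hk (Nat.not_lt_zero _)⟩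
  | @head a c hac _ ih =>
    obtain ⟨n, f, hf0, hfn, hf⟩ := ih
    refine ⟨n + 1, fun | 0 => a | k + 1 => f k, rfl, hfn, ?_⟩
    rintro (_ | k) hk
    · simpa only [hf0] using hac
    · exact hf k (Nat.lt_of_succ_lt_succ hk)

theorem ENNReal.exists_mem_forall_le_two_mul {α : Type*} {S : Set α} {f : α → ℝ≥0∞}
    {M : ℝ≥0∞} (hM : M ≠ ∞) (hle : ∀ a ∈ S, f a ≤ M) (hpos : ∃ a ∈ S, f a ≠ 0) :
    ∃ a ∈ S, ∀ b ∈ S, f b ≤ 2 * f a := by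
  set m := ⨆ b ∈ S, f b
  obtain ⟨a₁, ha₁, hfa₁⟩ := hpos
  have hm0 : m ≠ 0 := ne_bot_of_le_ne_bot hfa₁ (le_biSup f ha₁)
  have hmtop : m ≠ ∞ := ne_top_of_le_ne_top hM (iSup₂_le hle)
  obtain ⟨a, ha, hma⟩ := lt_biSup_iff.mp (ENNReal.half_lt_self hm0 hmtop)
  refine ⟨a, ha, fun b hb => (le_biSup f hb).trans ?_⟩
  rw [ENNReal.div_lt_iff (Or.inl two_ne_zero) (Or.inl ofNat_ne_top), mul_comm] at hma
  exact hma.le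

namespace BallBasis

variable {X : Type*} [MeasurableSpace X] {μ : Measure X} (ℬ : BallBasis X μ)

theorem nonempty_of_mem_balls {A : Set X} (hA : A ∈ ℬ.balls) : A.Nonempty :=
  nonempty_of_measure_ne_zero (ℬ.measure_pos A hA).ne'

theorem subset_hull {A B : Set X} (hA : A ∈ ℬ.balls) (hB : B ∈ ℬ.balls)
    (hμ : μ A ≤ 2 * μ B) (hAB : (A ∩ B).Nonempty) : A ⊆ ℬ.hull B :=
  fun _ hx => ℬ.star_subset_hull B hB ⟨A, ⟨hA, hμ, hAB⟩, hx⟩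

theorem measure_le_of_star_eq_univ {B : Set X} (hB : B ∈ ℬ.balls) (hstar : ℬ.star B = univ)
    (E : Set X) : μ E ≤ ℬ.K * μ B :=
  calc μ E ≤ μ (ℬ.hull B) :=
        measure_mono (hstar ▸ subset_univ E |>.trans (ℬ.star_subset_hull B hB))
    _ ≤ ℬ.K * μ B := ℬ.measure_hull_le B hB

theorem Doubling.exists_ssuperset_or_forall_measure_le {ℬ : BallBasis X μ} {η : ℝ≥0}
    (hd : ℬ.Doubling η) {B : Set X} (hB : B ∈ ℬ.balls) :
    (∃ B' ∈ ℬ.balls, B ⊂ B' ∧ μ B' ≤ η * μ B) ∨ ∀ E, μ E ≤ ℬ.K * μ B := by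
  by_cases hstar : ℬ.star B = univ
  · exact Or.inr (ℬ.measure_le_of_star_eq_univ hB hstar)
  · exact Or.inl (hd B hB hstar)

def Step (C : ℝ≥0) (P Q : Set X) : Prop :=
  Q ∈ ℬ.balls ∧ P ⊆ Q ∧ μ Q ≤ C * μ P

theorem Step.mono {ℬ : BallBasis X μ} {C C' : ℝ≥0} (hC : C ≤ C') {P Q : Set X}
    (h : ℬ.Step C P Q) : ℬ.Step C' P Q :=
  ⟨h.1, h.2.1, h.2.2.trans (by gcongr)⟩

theorem step_hull {C : ℝ≥0} (hK : ℬ.K ≤ C) {P : Set X} (hP : P ∈ ℬ.balls) :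
    ℬ.Step C P (ℬ.hull P) :=
  ⟨ℬ.hull_mem P hP, ℬ.subset_hull hP hP (le_mul_of_one_le_left zero_le one_le_two)
      ((inter_self P).symm ▸ ℬ.nonempty_of_mem_balls hP),
    (ℬ.measure_hull_le P hP).trans (by gcongr)⟩

section Reachable

variable {ℬ} {C : ℝ≥0} {A P : Set X}

theorem mem_balls_of_reflTransGen_step (hA : A ∈ ℬ.balls)
    (h : Relation.ReflTransGen (ℬ.Step C) A P) : P ∈ ℬ.balls := by
  induction h with
  | refl => exact hA
  | tail _ hstep _ => exact hstep.1

theorem subset_of_reflTransGen_step (h : Relation.ReflTransGen (ℬ.Step C) A P) : A ⊆ P := by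
  induction h with
  | refl => exact subset_rfl
  | tail _ hstep ih => exact ih.trans hstep.2.1

theorem measure_le_of_forall_subset {η L : ℝ≥0} (hd : ℬ.Doubling η) (hK : ℬ.K ≤ L)
    (hη : η ≤ L) {A H : Set X} (hA : A ∈ ℬ.balls) (hH : Relation.ReflTransGen (ℬ.Step L) A H)
    (B : Set X) (hmax : ∀ Q, Relation.ReflTransGen (ℬ.Step L) A Q → 2 * μ Q ≤ μ B → Q ⊆ H) :
    μ B ≤ 2 * L * μ H := by
  have hHb := mem_balls_of_reflTransGen_step hA hH
  rcases hd.exists_ssuperset_or_forall_measure_le hHb with ⟨H', hH'b, hHH', hμH'⟩ | hall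
  · have hreach : Relation.ReflTransGen (ℬ.Step L) A H' :=
      hH.tail ⟨hH'b, hHH'.subset, hμH'.trans (by gcongr)⟩
    have hbig : μ B < 2 * μ H' := lt_of_not_ge fun hsmall => hHH'.2 (hmax H' hreach hsmall)
    calc μ B ≤ 2 * μ H' := hbig.le
      _ ≤ 2 * (η * μ H) := by gcongr
      _ ≤ 2 * L * μ H := by rw [← mul_assoc]; gcongr
  · calc μ B ≤ ℬ.K * μ H := hall B
      _ ≤ L * μ H := by gcongr
      _ ≤ 2 * L * μ H := by gcongr; exact le_mul_of_one_le_left zero_le one_le_two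

theorem exists_reflTransGen_step_comparable {η L : ℝ≥0} (hd : ℬ.Doubling η) (h1 : 1 ≤ L)
    (hK : ℬ.K ≤ L) (hη : η ≤ L) {A B : Set X} (hA : A ∈ ℬ.balls) (hB : B ∈ ℬ.balls)
    (hAB : A ⊆ B) :
    ∃ P, Relation.ReflTransGen (ℬ.Step L) A P ∧ μ P ≤ μ B ∧ μ B ≤ 2 * L * μ P := by
  set S := {P | Relation.ReflTransGen (ℬ.Step L) A P ∧ 2 * μ P ≤ μ B}
  have hle : ∀ P ∈ S, μ P ≤ μ B := fun P hP =>
    (le_mul_of_one_le_left zero_le one_le_two).trans hP.2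
  by_cases hAS : 2 * μ A ≤ μ B
  swap
  · refine ⟨A, .refl, measure_mono hAB, (lt_of_not_ge hAS).le.trans ?_⟩
    gcongr
    exact le_mul_of_one_le_right zero_le (by exact_mod_cast h1)
  obtain ⟨P₀, hP₀S, hP₀⟩ := ENNReal.exists_mem_forall_le_two_mul (ℬ.measure_lt_top B hB).ne hle
    ⟨A, ⟨.refl, hAS⟩, (ℬ.measure_pos A hA).ne'⟩
  have hP₀b := mem_balls_of_reflTransGen_step hA hP₀S.1
  have habsorb : ∀ Q ∈ S, Q ⊆ ℬ.hull P₀ := fun Q hQ =>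
    ℬ.subset_hull (mem_balls_of_reflTransGen_step hA hQ.1) hP₀b (hP₀ Q hQ)
      ((ℬ.nonempty_of_mem_balls hA).mono
        (subset_inter (subset_of_reflTransGen_step hQ.1) (subset_of_reflTransGen_step hP₀S.1)))
  have hreach := hP₀S.1.tail (ℬ.step_hull hK hP₀b)
  by_cases hHS : 2 * μ (ℬ.hull P₀) ≤ μ B
  · exact ⟨_, hreach, hle _ ⟨hreach, hHS⟩, measure_le_of_forall_subset hd hK hη hA hreach
      B fun Q hQ hQB => habsorb Q ⟨hQ, hQB⟩⟩
  · refine ⟨P₀, hP₀S.1, hle P₀ hP₀S, ?_⟩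
    calc μ B ≤ 2 * μ (ℬ.hull P₀) := (lt_of_not_ge hHS).le
      _ ≤ 2 * (ℬ.K * μ P₀) := by gcongr; exact ℬ.measure_hull_le P₀ hP₀b
      _ ≤ 2 * L * μ P₀ := by rw [← mul_assoc]; gcongr

end Reachable

end BallBasis

theorem exists_chain_of_balls_general {X : Type*} [MeasurableSpace X]
    {μ : Measure X} (ℬ : BallBasis X μ) {η : ℝ≥0} (hd : ℬ.Doubling η) :
    ∃ C : ℝ≥0, 0 < C ∧ ∀ A ∈ ℬ.balls, ∀ B ∈ ℬ.balls, A ⊆ B →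
      ∃ (n : ℕ) (Ach : ℕ → Set X), Ach 0 = A ∧ Ach n = ℬ.hull B ∧
        (∀ k ≤ n, Ach k ∈ ℬ.balls) ∧
        ∀ k < n, Ach k ⊆ Ach (k + 1) ∧ μ (Ach (k + 1)) ≤ (C : ℝ≥0∞) * μ (Ach k) := by
  set L : ℝ≥0 := 1 + ℬ.K + η
  have h1 : 1 ≤ L := le_self_add.trans le_self_add
  have hK : ℬ.K ≤ L := le_add_self.trans le_self_add
  refine ⟨2 * L ^ 2, by positivity, fun A hA B hB hAB => ?_⟩
  obtain ⟨P, hP, hPB, hBP⟩ :=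
    ℬ.exists_reflTransGen_step_comparable hd h1 hK le_add_self hA hB hAB
  have hlast : ℬ.Step (2 * L ^ 2) P (ℬ.hull B) := by
    refine ⟨ℬ.hull_mem B hB, ℬ.subset_hull (BallBasis.mem_balls_of_reflTransGen_step hA hP) hB
      (hPB.trans (le_mul_of_one_le_left zero_le one_le_two))
      ((ℬ.nonempty_of_mem_balls hA).mono
        (subset_inter (BallBasis.subset_of_reflTransGen_step hP) hAB)), ?_⟩
    calc μ (ℬ.hull B) ≤ ℬ.K * μ B := ℬ.measure_hull_le B hB
      _ ≤ L * (2 * L * μ P) := by gcongr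
      _ = ((2 * L ^ 2 : ℝ≥0) : ℝ≥0∞) * μ P := by push_cast; ring
  have hLC : L ≤ 2 * L ^ 2 := by nlinarith
  obtain ⟨n, f, hf0, hfn, hf⟩ :=
    ((Relation.ReflTransGen.mono (fun _ _ h => h.mono hLC) _ _ hP).tail hlast).exists_seq
  refine ⟨n, f, hf0, hfn, ?_, fun k hk => (hf k hk).2⟩
  rintro (_ | k) hk
  · exact hf0 ▸ hA
  · exact (hf k hk).1

/-- In a doubling ball-basis, any pair of balls `A ⊆ B` is connected by a chain of balls
`A = A₀ ⊆ A₁ ⊆ … ⊆ Aₙ = [B]` of uniformly comparable consecutive measures. -/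
theorem exists_chain_of_balls {X : Type*} [MeasurableSpace X]
    {μ : Measure X} (ℬ : BallBasis X μ) {η : ℝ≥0} (hη : 1 < η) (hd : ℬ.Doubling η) :
    ∃ C : ℝ≥0, 0 < C ∧ ∀ A ∈ ℬ.balls, ∀ B ∈ ℬ.balls, A ⊆ B →
      ∃ (n : ℕ) (Ach : ℕ → Set X), Ach 0 = A ∧ Ach n = ℬ.hull B ∧
        (∀ k ≤ n, Ach k ∈ ℬ.balls) ∧
        ∀ k < n, Ach k ⊆ Ach (k + 1) ∧ μ (Ach (k + 1)) ≤ (C : ℝ≥0∞) * μ (Ach k) :=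
  exists_chain_of_balls_general ℬ hd
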